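/- (Deterministic disintegration of the randomized profit.) Let ξ : [0,∞) → [0,1] be nondecreasing, right-continuous, with ξ(0⁻)=0 and limit ξ_∞, and let τ(z) = inf{t : ξ(t) ≥ z}. Then for continuous integrable π̃ : [0,∞) → ℝ and bounded continuous G̃ : [0,∞) → ℝ, ∫₀^∞ π̃(t)(1 − ξ(t)) dt + ∫₀^∞ G̃(t) dξ(t) = ∫₀^1 [∫₀^{τ(z)} π̃(s) ds + G̃(τ(z))·1_{τ(z)<∞}] dz, where when τ(z) = ∞ the bracket is interpreted as ∫₀^∞ π̃(s) ds. -/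

import Mathlib

open scoped Classical
open MeasureTheory Set

section aux

variable (ξ : StieltjesFunction ℝ)

private def Sz (z : ℝ) : Set ℝ := {t : ℝ | 0 ≤ t ∧ z ≤ ξ t}

private lemma Sz_bddBelow (z : ℝ) : BddBelow (Sz ξ z) := ⟨0, fun _ ht => ht.1⟩

private lemma galois (hneg : ∀ t < (0:ℝ), ξ t = 0) {z : ℝ} (hz : 0 < z) (b : ℝ) :
    ((Sz ξ z).Nonempty ∧ sInf (Sz ξ z) ≤ b) ↔ z ≤ ξ b := by
  constructor
  · rintro ⟨hne, hle⟩
    have key : ∀ s, sInf (Sz ξ z) < s → z ≤ ξ s := by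
      intro s hs
      obtain ⟨t, htS, hts⟩ := exists_lt_of_csInf_lt hne hs
      exact htS.2.trans (ξ.mono hts.le)
    have h1 : z ≤ ξ (sInf (Sz ξ z)) := by
      have hrc : Filter.Tendsto ξ (nhdsWithin (sInf (Sz ξ z)) (Ioi (sInf (Sz ξ z))))
          (nhds (ξ (sInf (Sz ξ z)))) :=
        (ξ.right_continuous _).mono_left (nhdsWithin_mono _ Ioi_subset_Ici_self)
      refine ge_of_tendsto hrc ?_
      filter_upwards [self_mem_nhdsWithin] with s hs using key s hs
    exact h1.trans (ξ.mono hle)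
  · intro hb
    have hb0 : (0:ℝ) ≤ b := by
      by_contra h
      rw [hneg b (lt_of_not_ge h)] at hb; exact absurd hb (not_le.mpr hz)
    have hbS : b ∈ Sz ξ z := ⟨hb0, hb⟩
    exact ⟨⟨b, hbS⟩, csInf_le (Sz_bddBelow ξ z) hbS⟩

private lemma D_lower : ∀ ⦃z₁ z₂ : ℝ⦄, z₁ ≤ z₂ → (Sz ξ z₂).Nonempty → (Sz ξ z₁).Nonempty := by
  rintro z₁ z₂ h ⟨t, ht0, htz⟩; exact ⟨t, ht0, h.trans htz⟩

private lemma D_measurable : MeasurableSet {z : ℝ | (Sz ξ z).Nonempty} := by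
  have : OrdConnected {z : ℝ | (Sz ξ z).Nonempty} :=
    ⟨fun x hx y hy w hw => D_lower ξ hw.2 hy⟩
  exact this.measurableSet

private lemma tau_monoOn : MonotoneOn (fun z => sInf (Sz ξ z)) {z : ℝ | (Sz ξ z).Nonempty} :=
  fun z₁ _ z₂ h₂ h =>
    csInf_le_csInf (Sz_bddBelow ξ z₁) h₂ (fun t ht => ⟨ht.1, h.trans ht.2⟩)

end aux

/-- Deterministic disintegration of the randomized profit: with `τ(z) = inf{t : ξ(t) ≥ z}`
(whose finiteness corresponds to the set `S z` being nonempty),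
`∫₀^∞ π̃(t)(1 − ξ(t)) dt + ∫₀^∞ G̃(t) dξ(t)
  = ∫₀^1 [∫₀^{τ(z)} π̃ + G̃(τ(z))·1_{τ(z)<∞}] dz`,
where for `τ(z) = ∞` the bracket is interpreted as `∫₀^∞ π̃`. -/
theorem stmt5 (ξ : StieltjesFunction ℝ)
    (h01 : ∀ t, ξ t ∈ Set.Icc (0:ℝ) 1)
    (hneg : ∀ t < (0:ℝ), ξ t = 0)
    (π' : ℝ → ℝ) (hπc : Continuous π') (hπint : IntegrableOn π' (Set.Ioi 0))
    (G : ℝ → ℝ) (hGc : Continuous G) (hGb : ∃ M, ∀ t, |G t| ≤ M) :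
    (∫ t in Set.Ioi (0:ℝ), π' t * (1 - ξ t)) + (∫ t, G t ∂ξ.measure)
      = ∫ z in Set.Ioc (0:ℝ) 1,
          (if h : {t : ℝ | 0 ≤ t ∧ z ≤ ξ t}.Nonempty then
            (∫ s in Set.Ioc (0:ℝ) (sInf {t : ℝ | 0 ≤ t ∧ z ≤ ξ t}), π' s)
              + G (sInf {t : ℝ | 0 ≤ t ∧ z ≤ ξ t})
          else ∫ s in Set.Ioi (0:ℝ), π' s) := by
  obtain ⟨M, hM⟩ := hGb
  have hSz : ∀ z : ℝ, {t : ℝ | 0 ≤ t ∧ z ≤ ξ t} = Sz ξ z := fun _ => rfl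
  set τ : ℝ → ℝ := fun z => sInf (Sz ξ z) with hτdef
  set D : Set ℝ := {z : ℝ | (Sz ξ z).Nonempty} with hDdef
  have hDmeas : MeasurableSet D := D_measurable ξ
  set A : Set ℝ := Ioc (0:ℝ) 1 ∩ D with hAdef
  have hAmeas : MeasurableSet A := measurableSet_Ioc.inter hDmeas
  have hτA : AEMeasurable τ (volume.restrict A) :=
    aemeasurable_restrict_of_monotoneOn hAmeas ((tau_monoOn ξ).mono inter_subset_right)
  have hτD : AEMeasurable τ (volume.restrict D) :=
    aemeasurable_restrict_of_monotoneOn hDmeas (tau_monoOn ξ)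
  -- the measure identity: ξ.measure is the pushforward of Lebesgue on A under τ
  have hmap : ξ.measure = Measure.map τ (volume.restrict A) := by
    refine Measure.ext_of_Ioc' _ _
      (fun a b _ => by rw [ξ.measure_Ioc]; exact ENNReal.ofReal_ne_top)
      (fun a b hab => ?_)
    rw [ξ.measure_Ioc, Measure.map_apply_of_aemeasurable hτA measurableSet_Ioc,
      Measure.restrict_apply' hAmeas]
    have hset : τ ⁻¹' Ioc a b ∩ A = Ioc (ξ a) (ξ b) := by
      ext z
      simp only [mem_inter_iff, mem_preimage, mem_Ioc, hAdef, hDdef, mem_setOf_eq]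
      constructor
      · rintro ⟨⟨haz, hbz⟩, ⟨hz0, _⟩, hne⟩
        refine ⟨?_, ((galois ξ hneg hz0 b).mp ⟨hne, hbz⟩)⟩
        by_contra h
        exact absurd ((galois ξ hneg hz0 a).mpr (not_lt.mp h)).2 (not_le.mpr haz)
      · rintro ⟨haz, hbz⟩
        have hz0 : 0 < z := lt_of_le_of_lt (h01 a).1 haz
        obtain ⟨hne, hτb⟩ := (galois ξ hneg hz0 b).mpr hbz
        have hτa : a < τ z := by
          by_contra h
          exact absurd ((galois ξ hneg hz0 a).mp ⟨hne, not_lt.mp h⟩) (not_le.mpr haz)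
        exact ⟨⟨hτa, hτb⟩, ⟨⟨hz0, hbz.trans (h01 b).2⟩, hne⟩⟩
    rw [hset, Real.volume_Ioc]
  -- Part B : the Stieltjes integral of G
  have hGmeasD : AEMeasurable (fun z => G (τ z)) (volume.restrict D) :=
    hGc.measurable.comp_aemeasurable hτD
  have hindmeas : AEMeasurable (D.indicator (fun z => G (τ z))) (volume.restrict (Ioc (0:ℝ) 1)) :=
    (((aemeasurable_indicator_iff hDmeas).mpr hGmeasD)).restrict
  have hf₂int : Integrable (D.indicator (fun z => G (τ z))) (volume.restrict (Ioc (0:ℝ) 1)) := by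
    refine Integrable.mono' (integrable_const M) hindmeas.aestronglyMeasurable
      (Filter.Eventually.of_forall fun z => ?_)
    by_cases h : z ∈ D
    · simp only [indicator_of_mem h, Real.norm_eq_abs]; exact hM _
    · simp only [indicator_of_notMem h, norm_zero]
      exact le_trans (abs_nonneg (G 0)) (hM 0)
  have hpartB : (∫ t, G t ∂ξ.measure)
      = ∫ z in Ioc (0:ℝ) 1, D.indicator (fun z => G (τ z)) z := by
    rw [hmap, integral_map hτA hGc.aestronglyMeasurable,
      integral_indicator hDmeas]
    rw [Measure.restrict_restrict hDmeas, hAdef, inter_comm]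
  -- Part A : Fubini
  set F : ℝ × ℝ → ℝ := fun p => if ξ p.2 < p.1 then π' p.2 else 0 with hFdef
  have hFmeas : Measurable F := by
    refine Measurable.ite ?_ (hπc.measurable.comp measurable_snd) measurable_const
    exact measurableSet_lt (ξ.mono.measurable.comp measurable_snd) measurable_fst
  have hFsect : ∀ z : ℝ, Integrable (fun t => F (z, t)) (volume.restrict (Ioi (0:ℝ))) := by
    intro z
    refine Integrable.mono' hπint.norm
      ((hFmeas.comp measurable_prodMk_left).aestronglyMeasurable)
      (Filter.Eventually.of_forall fun t => ?_)
    simp only [hFdef, Function.comp]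
    split_ifs <;> simp [Real.norm_eq_abs, abs_nonneg]
  have hFint : Integrable F
      ((volume.restrict (Ioc (0:ℝ) 1)).prod (volume.restrict (Ioi (0:ℝ)))) := by
    rw [integrable_prod_iff hFmeas.aestronglyMeasurable]
    refine ⟨Filter.Eventually.of_forall hFsect, ?_⟩
    refine Integrable.mono' (integrable_const (∫ t in Ioi (0:ℝ), ‖π' t‖))
      ((hFmeas.norm.aestronglyMeasurable.integral_prod_right')) ?_
    refine Filter.Eventually.of_forall fun z => ?_
    rw [Real.norm_eq_abs, abs_of_nonneg (integral_nonneg fun t => norm_nonneg _)]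
    refine integral_mono_of_nonneg (Filter.Eventually.of_forall fun t => norm_nonneg _)
      hπint.norm (Filter.Eventually.of_forall fun t => ?_)
    simp only [hFdef]
    split_ifs <;> simp [Real.norm_eq_abs, abs_nonneg]
  -- the t-section computation
  have htside : ∀ t : ℝ, (∫ z in Ioc (0:ℝ) 1, F (z, t)) = π' t * (1 - ξ t) := by
    intro t
    have h1 : ∀ z : ℝ, F (z, t) = (Ioi (ξ t)).indicator (fun _ => π' t) z := by
      intro z
      simp only [hFdef, indicator_apply, mem_Ioi]
    simp_rw [h1]
    rw [integral_indicator measurableSet_Ioi, Measure.restrict_restrict measurableSet_Ioi]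
    have h2 : Ioi (ξ t) ∩ Ioc 0 1 = Ioc (ξ t) 1 := by
      ext z
      simp only [mem_inter_iff, mem_Ioi, mem_Ioc]
      constructor
      · rintro ⟨h, _, h2⟩; exact ⟨h, h2⟩
      · rintro ⟨h, h2⟩; exact ⟨h, lt_of_le_of_lt (h01 t).1 h, h2⟩
    rw [h2, setIntegral_const, Real.volume_real_Ioc_of_le (by linarith [(h01 t).2]),
      smul_eq_mul, mul_comm]
  -- the z-section computation
  have hzside : ∀ z ∈ Ioc (0:ℝ) 1, (∫ t in Ioi (0:ℝ), F (z, t))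
      = if (Sz ξ z).Nonempty then ∫ s in Ioc (0:ℝ) (τ z), π' s else ∫ s in Ioi (0:ℝ), π' s := by
    intro z hz
    have h1 : ∀ t : ℝ, F (z, t) = ({t : ℝ | ξ t < z}).indicator π' t := by
      intro t; simp only [hFdef, indicator_apply, mem_setOf_eq]
    simp_rw [h1]
    rw [integral_indicator (measurableSet_lt ξ.mono.measurable measurable_const),
      Measure.restrict_restrict (measurableSet_lt ξ.mono.measurable measurable_const)]
    by_cases hne : (Sz ξ z).Nonempty
    · have h2 : {t : ℝ | ξ t < z} ∩ Ioi 0 = Ioo 0 (τ z) := by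
        ext t
        simp only [mem_inter_iff, mem_setOf_eq, mem_Ioi, mem_Ioo]
        constructor
        · rintro ⟨hlt, ht0⟩
          refine ⟨ht0, ?_⟩
          by_contra h
          exact absurd ((galois ξ hneg hz.1 t).mp ⟨hne, not_lt.mp h⟩) (not_le.mpr hlt)
        · rintro ⟨ht0, htτ⟩
          refine ⟨?_, ht0⟩
          by_contra h
          exact absurd ((galois ξ hneg hz.1 t).mpr (not_lt.mp h)).2 (not_le.mpr htτ)
      rw [if_pos hne, h2, ← integral_Ioc_eq_integral_Ioo]
    · have h2 : {t : ℝ | ξ t < z} ∩ Ioi 0 = Ioi 0 := by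
        refine inter_eq_right.mpr fun t ht => ?_
        by_contra h
        exact hne ⟨t, le_of_lt ht, not_lt.mp h⟩
      rw [if_neg hne, h2]
  -- integrability of the first RHS piece
  set f₁ : ℝ → ℝ := fun z =>
    if (Sz ξ z).Nonempty then ∫ s in Ioc (0:ℝ) (τ z), π' s else ∫ s in Ioi (0:ℝ), π' s with hf₁def
  have hg₁int : Integrable (fun z => ∫ t in Ioi (0:ℝ), F (z, t))
      (volume.restrict (Ioc (0:ℝ) 1)) := hFint.integral_prod_left
  have hf₁eq : ∀ᵐ z ∂(volume.restrict (Ioc (0:ℝ) 1)),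
      (fun z => ∫ t in Ioi (0:ℝ), F (z, t)) z = f₁ z := by
    filter_upwards [ae_restrict_mem measurableSet_Ioc] with z hz
    exact hzside z hz
  have hf₁int : Integrable f₁ (volume.restrict (Ioc (0:ℝ) 1)) := hg₁int.congr hf₁eq
  have hpartA : (∫ t in Set.Ioi (0:ℝ), π' t * (1 - ξ t))
      = ∫ z in Ioc (0:ℝ) 1, f₁ z := by
    rw [← integral_congr_ae hf₁eq]
    rw [integral_integral_swap hFint]
    exact (integral_congr_ae (Filter.Eventually.of_forall fun t => htside t)).symm
  -- assemble
  rw [hpartA, hpartB, ← integral_add hf₁int hf₂int]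
  refine setIntegral_congr_fun measurableSet_Ioc fun z hz => ?_
  simp only [hf₁def, hSz, indicator_apply]
  by_cases hne : (Sz ξ z).Nonempty
  · have hzD : z ∈ D := hne
    rw [if_pos hne, if_pos hzD, dif_pos hne]
  · have hzD : z ∉ D := hne
    rw [if_neg hne, if_neg hzD, dif_neg hne, add_zero]
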